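/- Fix θ ∈ ℝ and an integer L ≥ 1. On ℋ = ℓ²(ℤ²; ℂ^L) define the unitary magnetic translations u₁, u₂ by (u₁ψ)(n) = ψ(n − e₁) and (u₂ψ)(n) = e^{iθn₁}·ψ(n − e₂), where n = (n₁,n₂) ∈ ℤ² and e₁ = (1,0), e₂ = (0,1). Let C be the componentwise complex conjugation on ℋ and set ū_j = C∘u_j∘C. On ℋ_ph = ℋ ⊕ ℋ define U_j = u_j ⊕ ū_j for j = 1, 2, and Q = 1 ⊕ (−1). If A is a bounded operator on ℋ_ph satisfying U_j·A·U_j* = A for j = 1, 2 and A·Q ≠ Q·A, then e^{4iθ} = 1, i.e. θ is an integer multiple of π/2. -/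

import Mathlib

noncomputable section
open scoped ENNReal

/-- Index set of ℓ²(ℤ²;ℂ^L). -/
abbrev SIdx (L : ℕ) : Type := (ℤ × ℤ) × Fin L

/-- The Hilbert space ℋ = ℓ²(ℤ²;ℂ^L). -/
abbrev HS (L : ℕ) : Type := lp (fun _ : SIdx L => ℂ) 2

/-- The operator ψ ↦ (i ↦ φ(i)·ψ(e(i))) on ℓ², for an index bijection `e` and a
unimodular phase function `φ`. -/
noncomputable def phaseShift {L : ℕ} (e : SIdx L ≃ SIdx L) (φ : SIdx L → ℂ)
    (hφ : ∀ i, ‖φ i‖ = 1) : HS L →L[ℂ] HS L :=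
  LinearMap.mkContinuous
    { toFun := fun ψ =>
        (⟨fun i => φ i • ψ (e i), by
          apply memℓp_gen
          have h2 : (0 : ℝ) < (2 : ℝ≥0∞).toReal := by norm_num
          have hs : Summable fun i => ‖ψ i‖ ^ (2 : ℝ≥0∞).toReal :=
            (lp.memℓp ψ).summable h2
          have hs' : Summable fun i => ‖ψ (e i)‖ ^ (2 : ℝ≥0∞).toReal :=
            e.summable_iff.2 hs
          exact hs'.congr fun i => by rw [norm_smul, hφ i, one_mul]⟩ : HS L)
      map_add' := fun ψ χ => by
        apply Subtype.ext
        funext i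
        simp only [lp.coeFn_add, Pi.add_apply, smul_eq_mul, mul_add]
      map_smul' := fun c ψ => by
        apply Subtype.ext
        funext i
        simp only [lp.coeFn_smul, Pi.smul_apply, smul_eq_mul, RingHom.id_apply]
        show φ i * (c * ψ (e i)) = (c • (fun j => φ j * ψ (e j) : ∀ _ : SIdx L, ℂ)) i
        simp only [Pi.smul_apply, smul_eq_mul]
        ring }
    1
    (fun ψ => by
      have h2 : (0 : ℝ) < (2 : ℝ≥0∞).toReal := by norm_num
      show ‖(⟨fun i => φ i • ψ (e i), _⟩ : HS L)‖ ≤ 1 * ‖ψ‖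
      rw [one_mul]
      apply le_of_eq
      rw [lp.norm_eq_tsum_rpow h2, lp.norm_eq_tsum_rpow h2]
      congr 1
      have : ∀ i, ‖φ i • ψ (e i)‖ ^ (2 : ℝ≥0∞).toReal
          = ‖ψ (e i)‖ ^ (2 : ℝ≥0∞).toReal := fun i => by
        rw [norm_smul, hφ i, one_mul]
      calc (∑' i, ‖φ i • ψ (e i)‖ ^ (2 : ℝ≥0∞).toReal)
          = ∑' i, ‖ψ (e i)‖ ^ (2 : ℝ≥0∞).toReal := by
            exact tsum_congr this
        _ = ∑' i, ‖ψ i‖ ^ (2 : ℝ≥0∞).toReal :=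
            e.tsum_eq (fun i => ‖ψ i‖ ^ (2 : ℝ≥0∞).toReal))

/-- The index translation (n,l) ↦ (n-v, l). -/
def transIdx (L : ℕ) (v : ℤ × ℤ) : SIdx L ≃ SIdx L :=
  (Equiv.subRight v).prodCongr (Equiv.refl (Fin L))

/-- The magnetic translation u₁ : (u₁ψ)(n) = ψ(n-e₁). -/
noncomputable def u1 (L : ℕ) : HS L →L[ℂ] HS L :=
  phaseShift (transIdx L (1, 0)) (fun _ => 1) (fun _ => by simp)

/-- The magnetic translation u₂ : (u₂ψ)(n) = e^{iθn₁}ψ(n-e₂), in the Landau gauge with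
flux θ = qB. -/
noncomputable def u2 (L : ℕ) (θ : ℝ) : HS L →L[ℂ] HS L :=
  phaseShift (transIdx L (0, 1))
    (fun i => Complex.exp ((θ * (i.1.1 : ℝ) : ℝ) * Complex.I))
    (fun i => by exact Complex.norm_exp_ofReal_mul_I _)

/-- Conjugation ā = C ∘ a ∘ C with C the componentwise complex conjugation. -/
noncomputable def conjOp {L : ℕ} (a : HS L →L[ℂ] HS L) : HS L →L[ℂ] HS L :=
  LinearMap.mkContinuous
    { toFun := fun ψ => star (a (star ψ))
      map_add' := fun x y => by simp [star_add, map_add]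
      map_smul' := fun c x => by simp [star_smul, _root_.map_smul] }
    ‖a‖
    (fun x => by
      show ‖star (a (star x))‖ ≤ ‖a‖ * ‖x‖
      rw [norm_star]
      exact (a.le_opNorm _).trans (by rw [norm_star]))

/-- The particle-hole Hilbert space ℋ_ph = ℋ ⊕ ℋ. -/
abbrev Hph (L : ℕ) : Type := WithLp 2 (HS L × HS L)

/-- The direct sum a ⊕ b of two operators, acting on ℋ_ph = ℋ ⊕ ℋ. -/
noncomputable def prodOp {L : ℕ} (a b : HS L →L[ℂ] HS L) : Hph L →L[ℂ] Hph L :=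
  (WithLp.prodContinuousLinearEquiv 2 ℂ (HS L) (HS L)).symm.toContinuousLinearMap ∘L
    (a.prodMap b) ∘L
      (WithLp.prodContinuousLinearEquiv 2 ℂ (HS L) (HS L)).toContinuousLinearMap

/-- The magnetic translations U_j = u_j ⊕ ū_j on the particle-hole space. -/
noncomputable def Uop (L : ℕ) (θ : ℝ) : Fin 2 → (Hph L →L[ℂ] Hph L)
  | 0 => prodOp (u1 L) (conjOp (u1 L))
  | 1 => prodOp (u2 L θ) (conjOp (u2 L θ))

/-- The charge operator Q = 1 ⊕ (-1) on the particle-hole space. -/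
noncomputable def Qop (L : ℕ) : Hph L →L[ℂ] Hph L := prodOp 1 (-1)

/-! Covariance makes `A` commute with the unitaries `U₁` and `U₂`. The magnetic translations
satisfy `u₁ u₂ = e^{-iθ} u₂ u₁`, and `ū₂` is the translation for flux `-θ`, so
`U₁ U₂ = e^{-iθQ} U₂ U₁`. Hence `A` commutes with `e^{-iθQ} = cos θ - i sin θ Q`, which forces
`sin θ = 0` unless `A` commutes with `Q`. -/

open Complex ComplexConjugate

theorem commute_of_mul_mul_star_eq {R : Type*} [Monoid R] [StarMul R] {U A : R}
    (hU : U ∈ unitary R) (h : U * A * star U = A) : Commute A U :=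
  calc A * U = U * A * star U * U := by rw [h]
    _ = U * A := by rw [mul_assoc _ (star U), Unitary.star_mul_self_of_mem hU, mul_one]

theorem commute_of_mul_eq_mul_mul {R : Type*} [Monoid R] {a v w d : R}
    (hvw : v * w = d * (w * v)) (hv : Commute a v) (hw : Commute a w) (hwv : IsUnit (w * v)) :
    Commute a d :=
  hwv.mul_left_inj.mp <| calc
    a * d * (w * v) = a * (v * w) := by rw [hvw, mul_assoc]
    _ = d * (w * v) * a := by rw [(hv.mul_right hw).eq, hvw]
    _ = d * a * (w * v) := by rw [mul_assoc, ← (hw.mul_right hv).eq, mul_assoc]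

theorem eq_zero_of_commute_smul_one_add_smul {𝕜 R : Type*} [DivisionRing 𝕜] [Ring R]
    [Module 𝕜 R] [IsScalarTower 𝕜 R R] [SMulCommClass 𝕜 R R] {a q : R} {x y : 𝕜}
    (h : Commute a (x • 1 + y • q)) (hq : ¬Commute a q) : y = 0 := by
  have hy : Commute a (y • q) := by simpa using h.sub_right ((Commute.one_right a).smul_right x)
  by_contra hy0
  exact hq (by simpa [hy0] using hy.smul_right y⁻¹)

section PhaseShift

variable {L : ℕ}

@[simp] theorem phaseShift_apply (e : SIdx L ≃ SIdx L) (φ : SIdx L → ℂ)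
    (hφ : ∀ i, ‖φ i‖ = 1) (ψ : HS L) (i : SIdx L) :
    phaseShift e φ hφ ψ i = φ i * ψ (e i) := rfl

theorem phaseShift_congr {e : SIdx L ≃ SIdx L} {φ χ : SIdx L → ℂ}
    {hφ : ∀ i, ‖φ i‖ = 1} {hχ : ∀ i, ‖χ i‖ = 1} (h : ∀ i, φ i = χ i) :
    phaseShift e φ hφ = phaseShift e χ hχ := by
  obtain rfl := funext h
  rfl

theorem phaseShift_refl_one :
    phaseShift (Equiv.refl (SIdx L)) (fun _ => 1) (fun _ => norm_one) = 1 := by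
  ext ψ i
  exact one_mul _

theorem phaseShift_mul (e f : SIdx L ≃ SIdx L) (φ χ : SIdx L → ℂ)
    (hφ : ∀ i, ‖φ i‖ = 1) (hχ : ∀ i, ‖χ i‖ = 1) :
    phaseShift e φ hφ * phaseShift f χ hχ =
      phaseShift (e.trans f) (fun i => φ i * χ (e i))
        (fun i => by rw [norm_mul, hφ i, hχ (e i), one_mul]) := by
  ext ψ i
  exact (mul_assoc _ _ _).symm

theorem phaseShift_smul (c : ℂ) (hc : ‖c‖ = 1) (e : SIdx L ≃ SIdx L)
    (φ : SIdx L → ℂ) (hφ : ∀ i, ‖φ i‖ = 1) :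
    phaseShift e (fun i => c * φ i) (fun i => by rw [norm_mul, hc, hφ i, one_mul])
      = c • phaseShift e φ hφ := by
  ext ψ i
  exact mul_assoc _ _ _

theorem phaseShift_star (e : SIdx L ≃ SIdx L) (φ : SIdx L → ℂ) (hφ : ∀ i, ‖φ i‖ = 1) :
    star (phaseShift e φ hφ) =
      phaseShift e.symm (fun j => conj (φ (e.symm j)))
        (fun j => by rw [RCLike.norm_conj]; exact hφ _) := by
  rw [ContinuousLinearMap.star_eq_adjoint, eq_comm, ContinuousLinearMap.eq_adjoint_iff]
  intro x y
  simp only [lp.inner_eq_tsum, RCLike.inner_apply, phaseShift_apply, map_mul, conj_conj]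
  rw [← e.tsum_eq]
  refine tsum_congr fun i => ?_
  rw [e.symm_apply_apply]
  ring

theorem phaseShift_mem_unitary (e : SIdx L ≃ SIdx L) (φ : SIdx L → ℂ)
    (hφ : ∀ i, ‖φ i‖ = 1) : phaseShift e φ hφ ∈ unitary (HS L →L[ℂ] HS L) := by
  have hconj : ∀ z : ℂ, ‖z‖ = 1 → conj z * z = 1 := fun z hz => by
    rw [mul_comm, mul_conj, normSq_eq_norm_sq, hz]; norm_num
  refine ⟨?_, ?_⟩ <;>
    rw [phaseShift_star, phaseShift_mul, ← phaseShift_refl_one]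
  · rw [Equiv.symm_trans_self]
    exact phaseShift_congr fun _ => hconj _ (hφ _)
  · rw [Equiv.self_trans_symm]
    exact phaseShift_congr fun i => by rw [e.symm_apply_apply, mul_comm]; exact hconj _ (hφ _)

theorem conjOp_phaseShift (e : SIdx L ≃ SIdx L) (φ : SIdx L → ℂ) (hφ : ∀ i, ‖φ i‖ = 1) :
    conjOp (phaseShift e φ hφ) =
      phaseShift e (fun i => conj (φ i)) (fun i => by rw [RCLike.norm_conj]; exact hφ i) := by
  ext ψ i
  show star (φ i * star (ψ (e i))) = conj (φ i) * ψ (e i)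
  simp

end PhaseShift

section MagneticTranslations

variable {L : ℕ}

theorem u1_mem_unitary : u1 L ∈ unitary (HS L →L[ℂ] HS L) := phaseShift_mem_unitary _ _ _

theorem u2_mem_unitary (θ : ℝ) : u2 L θ ∈ unitary (HS L →L[ℂ] HS L) :=
  phaseShift_mem_unitary _ _ _

theorem conjOp_u1 : conjOp (u1 L) = u1 L := by
  rw [u1, conjOp_phaseShift]
  exact phaseShift_congr fun _ => map_one _

theorem conjOp_u2 (θ : ℝ) : conjOp (u2 L θ) = u2 L (-θ) := by
  rw [u2, conjOp_phaseShift, u2]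
  refine phaseShift_congr fun i => ?_
  rw [← exp_conj, map_mul, conj_ofReal, conj_I]
  push_cast
  ring_nf

theorem transIdx_trans (v w : ℤ × ℤ) :
    (transIdx L v).trans (transIdx L w) = transIdx L (v + w) :=
  Equiv.ext fun _ => Prod.ext (sub_sub _ _ _) rfl

theorem u1_mul_u2 (θ : ℝ) : u1 L * u2 L θ = exp (-θ * I) • (u2 L θ * u1 L) := by
  have hc : ‖exp (-θ * I)‖ = 1 := by exact_mod_cast norm_exp_ofReal_mul_I (-θ)
  rw [u1, u2, phaseShift_mul, phaseShift_mul, ← phaseShift_smul _ hc, transIdx_trans,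
    transIdx_trans, add_comm]
  refine phaseShift_congr fun i => ?_
  rw [one_mul, mul_one, ← exp_add]
  show exp (↑(θ * ↑(i.1.1 - 1)) * I) = _
  push_cast
  ring_nf

end MagneticTranslations

section ParticleHole

variable {L : ℕ}

theorem prodOp_mul (a b c d : HS L →L[ℂ] HS L) :
    prodOp a b * prodOp c d = prodOp (a * c) (b * d) := rfl

theorem prodOp_one : prodOp (L := L) 1 1 = 1 := rfl

theorem prodOp_star (a b : HS L →L[ℂ] HS L) :
    star (prodOp a b) = prodOp (star a) (star b) := by
  rw [ContinuousLinearMap.star_eq_adjoint, eq_comm, ContinuousLinearMap.eq_adjoint_iff]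
  intro x y
  simp only [WithLp.prod_inner_apply, ContinuousLinearMap.star_eq_adjoint]
  exact congrArg₂ (· + ·) (a.adjoint_inner_left _ _) (b.adjoint_inner_left _ _)

theorem prodOp_mem_unitary {a b : HS L →L[ℂ] HS L} (ha : a ∈ unitary (HS L →L[ℂ] HS L))
    (hb : b ∈ unitary (HS L →L[ℂ] HS L)) : prodOp a b ∈ unitary (Hph L →L[ℂ] Hph L) := by
  refine ⟨?_, ?_⟩ <;> rw [prodOp_star, prodOp_mul, ← prodOp_one]
  · rw [Unitary.star_mul_self_of_mem ha, Unitary.star_mul_self_of_mem hb]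
  · rw [Unitary.mul_star_self_of_mem ha, Unitary.mul_star_self_of_mem hb]

theorem prodOp_smul (c d : ℂ) (a b : HS L →L[ℂ] HS L) :
    prodOp (c • a) (d • b) = prodOp (c • 1) (d • 1) * prodOp a b := by
  rw [prodOp_mul, smul_one_mul, smul_one_mul]

theorem prodOp_smul_one (c d : ℂ) :
    prodOp (c • 1) (d • 1) = ((c + d) / 2) • (1 : Hph L →L[ℂ] Hph L) + ((c - d) / 2) • Qop L := by
  ext x
  refine (WithLp.ext_iff 2).2 (Prod.ext ?_ ?_)
  · show c • x.fst = ((c + d) / 2) • x.fst + ((c - d) / 2) • x.fst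
    rw [← add_smul]
    ring_nf
  · show d • x.snd = ((c + d) / 2) • x.snd + ((c - d) / 2) • -x.snd
    rw [smul_neg, ← sub_eq_add_neg, ← sub_smul]
    ring_nf

theorem eq_of_commute_prodOp_smul_one {A : Hph L →L[ℂ] Hph L} {c d : ℂ}
    (h : Commute A (prodOp (c • 1) (d • 1))) (hQ : ¬Commute A (Qop L)) : c = d := by
  rw [prodOp_smul_one] at h
  have := eq_zero_of_commute_smul_one_add_smul h hQ
  rwa [div_eq_zero_iff, sub_eq_zero, or_iff_left two_ne_zero] at this

end ParticleHole

section Covariance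

variable {L : ℕ}

theorem Uop_zero (θ : ℝ) : Uop L θ 0 = prodOp (u1 L) (u1 L) := by
  rw [Uop, conjOp_u1]

theorem Uop_one (θ : ℝ) : Uop L θ 1 = prodOp (u2 L θ) (u2 L (-θ)) := by
  rw [Uop, conjOp_u2]

theorem Uop_mem_unitary (θ : ℝ) : ∀ j, Uop L θ j ∈ unitary (Hph L →L[ℂ] Hph L)
  | 0 => Uop_zero θ ▸ prodOp_mem_unitary u1_mem_unitary u1_mem_unitary
  | 1 => Uop_one θ ▸ prodOp_mem_unitary (u2_mem_unitary θ) (u2_mem_unitary (-θ))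

theorem Uop_zero_mul_Uop_one (θ : ℝ) :
    Uop L θ 0 * Uop L θ 1 =
      prodOp (exp (-θ * I) • 1) (exp (θ * I) • 1) * (Uop L θ 1 * Uop L θ 0) := by
  rw [Uop_zero, Uop_one, prodOp_mul, prodOp_mul, u1_mul_u2, u1_mul_u2, ofReal_neg, neg_neg,
    prodOp_smul]

end Covariance

theorem exists_int_eq_mul_pi_of_exp_neg_mul_I_eq {θ : ℝ} (h : exp (-θ * I) = exp (θ * I)) :
    ∃ n : ℤ, θ = n * Real.pi := by
  obtain ⟨n, hn⟩ := exp_eq_exp_iff_exists_int.1 h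
  refine ⟨-n, ?_⟩
  have h' : -θ = θ + n * (2 * Real.pi) := by simpa using congrArg im hn
  push_cast
  linarith

theorem covariant_charge_nonconservation_general (L : ℕ) (θ : ℝ)
    (A : Hph L →L[ℂ] Hph L)
    (hcov : ∀ j : Fin 2, Uop L θ j * A * star (Uop L θ j) = A)
    (hQ : A * Qop L ≠ Qop L * A) :
    Complex.exp (4 * (θ : ℂ) * Complex.I) = 1 ∧
      ∃ k : ℤ, θ = k * (Real.pi / 2) := by
  have hcomm (j : Fin 2) : Commute A (Uop L θ j) :=
    commute_of_mul_mul_star_eq (Uop_mem_unitary θ j) (hcov j)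
  have hunit : IsUnit (Uop L θ 1 * Uop L θ 0) :=
    Unitary.isUnit_coe (U := ⟨_, mul_mem (Uop_mem_unitary θ 1) (Uop_mem_unitary θ 0)⟩)
  have hexp : exp (-θ * I) = exp (θ * I) := eq_of_commute_prodOp_smul_one
    (commute_of_mul_eq_mul_mul (Uop_zero_mul_Uop_one θ) (hcomm 0) (hcomm 1) hunit) hQ
  obtain ⟨n, rfl⟩ := exists_int_eq_mul_pi_of_exp_neg_mul_I_eq hexp
  refine ⟨?_, 2 * n, by push_cast; ring⟩
  rw [show 4 * ((n * Real.pi : ℝ) : ℂ) * I = (2 * n : ℤ) * (2 * Real.pi * I) by push_cast; ring]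
  exact exp_int_mul_two_pi_mul_I _

/-- Proposition 3.1: if a bounded operator A on ℋ_ph is covariant,
U_j·A·U_j* = A for j = 1,2, and does not commute with the charge operator Q, then
e^{4iθ} = 1, i.e. θ = qB is an integer multiple of π/2. -/
theorem covariant_charge_nonconservation (L : ℕ) (hL : 1 ≤ L) (θ : ℝ)
    (A : Hph L →L[ℂ] Hph L)
    (hcov : ∀ j : Fin 2, Uop L θ j * A * star (Uop L θ j) = A)
    (hQ : A * Qop L ≠ Qop L * A) :
    Complex.exp (4 * (θ : ℂ) * Complex.I) = 1 ∧
      ∃ k : ℤ, θ = k * (Real.pi / 2) :=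
  covariant_charge_nonconservation_general L θ A hcov hQ
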